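/- Let ξ be real and define L(x) = max(|x0ξ - x1|, |x0ξ² - x2|) for x ∈ ℤ³. Then there is a constant C(ξ) such that for all x, y, z ∈ ℤ³, |det(x,y,z)| ≤ C(ξ)·(‖x‖L(y)L(z) + ‖y‖L(x)L(z) + ‖z‖L(x)L(y)). -/

import Mathlib

/-! Subtracting `ξ` times the first column from the second and `ξ²` times it from the third
does not change `det(x, y, z)`, and turns the rows into `(x₀, x₁ - x₀ξ, x₂ - x₀ξ²)`, whose last
two entries are bounded by `L(x)`. Expanding along the first column, each term is `±x₀` times a
`2 × 2` minor of such residuals, so it is at most `2 ‖x‖ L(y) L(z)`. -/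

noncomputable def normT (x : Fin 3 → ℤ) : ℝ :=
  max (|(x 0 : ℝ)|) (max (|(x 1 : ℝ)|) (|(x 2 : ℝ)|))

noncomputable def Lf (ξ : ℝ) (x : Fin 3 → ℤ) : ℝ :=
  max (|(x 0 : ℝ) * ξ - (x 1 : ℝ)|) (|(x 0 : ℝ) * ξ ^ 2 - (x 2 : ℝ)|)

def det3 (x y z : Fin 3 → ℤ) : ℤ :=
  (!![x 0, x 1, x 2; y 0, y 1, y 2; z 0, z 1, z 2]).det

theorem abs_mul_sub_mul_le {a b c d P Q : ℝ} (ha : |a| ≤ P) (hb : |b| ≤ P) (hc : |c| ≤ Q)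
    (hd : |d| ≤ Q) : |a * d - b * c| ≤ 2 * (P * Q) :=
  calc |a * d - b * c| ≤ |a| * |d| + |b| * |c| := by
        simpa only [abs_mul] using abs_sub (a * d) (b * c)
    _ ≤ P * Q + P * Q := by
        have hP : 0 ≤ P := (abs_nonneg a).trans ha
        gcongr
    _ = 2 * (P * Q) := by ring

theorem abs_coord_zero_le_normT (x : Fin 3 → ℤ) : |(x 0 : ℝ)| ≤ normT x :=
  le_max_left _ _

section Residuals

variable (ξ : ℝ)

noncomputable def linResidual (x : Fin 3 → ℤ) : ℝ := (x 0 : ℝ) * ξ - x 1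

noncomputable def quadResidual (x : Fin 3 → ℤ) : ℝ := (x 0 : ℝ) * ξ ^ 2 - x 2

noncomputable def residualMinor (y z : Fin 3 → ℤ) : ℝ :=
  linResidual ξ y * quadResidual ξ z - quadResidual ξ y * linResidual ξ z

theorem det3_eq_expansion_residualMinor (x y z : Fin 3 → ℤ) :
    (det3 x y z : ℝ) = x 0 * residualMinor ξ y z - y 0 * residualMinor ξ x z
      + z 0 * residualMinor ξ x y := by
  simp only [det3, Matrix.det_fin_three, Matrix.of_apply, Matrix.cons_val', Matrix.cons_val_zero,
    Matrix.cons_val_one, Matrix.cons_val_two, Matrix.vecHead, Matrix.tail_cons,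
    Matrix.empty_val', Matrix.cons_val_fin_one, residualMinor, linResidual, quadResidual]
  push_cast
  ring

theorem abs_residualMinor_le (y z : Fin 3 → ℤ) :
    |residualMinor ξ y z| ≤ 2 * (Lf ξ y * Lf ξ z) :=
  abs_mul_sub_mul_le (le_max_left _ _) (le_max_right _ _) (le_max_left _ _) (le_max_right _ _)

theorem abs_mul_residualMinor_le (x y z : Fin 3 → ℤ) :
    |(x 0 : ℝ) * residualMinor ξ y z| ≤ 2 * (normT x * Lf ξ y * Lf ξ z) := by
  rw [abs_mul, mul_assoc (normT x), mul_left_comm]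
  exact mul_le_mul (abs_coord_zero_le_normT x) (abs_residualMinor_le ξ y z) (abs_nonneg _)
    ((abs_nonneg _).trans (abs_coord_zero_le_normT x))

end Residuals

theorem det_estimate (ξ : ℝ) :
    ∃ C : ℝ, 0 < C ∧ ∀ x y z : Fin 3 → ℤ,
      |(det3 x y z : ℤ)| ≤
        C * (normT x * Lf ξ y * Lf ξ z + normT y * Lf ξ x * Lf ξ z +
             normT z * Lf ξ x * Lf ξ y) := by
  refine ⟨2, two_pos, fun x y z => ?_⟩
  have hx := abs_mul_residualMinor_le ξ x y z
  have hy := abs_mul_residualMinor_le ξ y x z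
  have hz := abs_mul_residualMinor_le ξ z x y
  have hsum (a b c : ℝ) : |a - b + c| ≤ |a| + |b| + |c| :=
    (abs_add_le _ _).trans (add_le_add_left (abs_sub a b) _)
  rw [Int.cast_abs, det3_eq_expansion_residualMinor ξ]
  linarith [hsum (x 0 * residualMinor ξ y z) (y 0 * residualMinor ξ x z)
    (z 0 * residualMinor ξ x y)]
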